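/- For the simplex S₂ ⊂ R³ with vertices (1/2,0,0), (1/2,1,0), (0,1/2,1), (1,1/2,1), one has ξ(S₂) = 3 and every vertex of the cube Q₃ = [0,1]³ lies on the boundary of the simplex 3S₂; i.e., S₂ is a perfect simplex. -/

import Mathlib

/-!
For a simplex `S ⊆ ℝⁿ` with Lagrange (barycentric) polynomials `λⱼ`, the homothety of ratio
`σ` about the centroid scales `λⱼ - 1/(n + 1)` by `σ`, so `σS` is cut out by the inequalities
`λⱼ ≥ (1 - σ)/(n + 1)`. For `S₂` the `λⱼ` are explicit and for `σ = 3` the bound is `-1/2`.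
Every `λⱼ` is at least `-1/2` on `Q₃`, so `Q₃ ⊆ 3S₂`; since `λ₀(1,1,1) = -1/2`, no smaller
ratio works. Each vertex of `Q₃` makes some `λⱼ` equal to `-1/2`, so it lies on a facet of
`3S₂`.
-/

open Finset MeasureTheory

/-- The unit cube `[0,1]^n` in `ℝ^n`. -/
def unitCube (n : ℕ) : Set (Fin n → ℝ) := {x | ∀ i, 0 ≤ x i ∧ x i ≤ 1}

/-- The set of vertices of the unit cube, i.e. `{0,1}^n`. -/
def cubeVerts (n : ℕ) : Set (Fin n → ℝ) := {x | ∀ i, x i = 0 ∨ x i = 1}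

/-- The (solid) simplex spanned by `n+1` points. -/
def simplexSet {n : ℕ} (v : Fin (n + 1) → (Fin n → ℝ)) : Set (Fin n → ℝ) :=
  convexHull ℝ (Set.range v)

/-- The centroid (center of gravity) of the simplex with vertices `v`. -/
noncomputable def simplexCentroid {n : ℕ} (v : Fin (n + 1) → (Fin n → ℝ)) : Fin n → ℝ :=
  ((n : ℝ) + 1)⁻¹ • ∑ j, v j

/-- The homothety of the simplex with vertices `v`, with center the centroid and ratio `σ`. -/
noncomputable def homSimplex {n : ℕ} (v : Fin (n + 1) → (Fin n → ℝ)) (σ : ℝ) : Set (Fin n → ℝ) :=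
  (fun x => simplexCentroid v + σ • (x - simplexCentroid v)) '' simplexSet v

/-- `ξ(S) = min {σ ≥ 1 : Q_n ⊆ σS}`. -/
noncomputable def xiVal {n : ℕ} (v : Fin (n + 1) → (Fin n → ℝ)) : ℝ :=
  sInf {σ : ℝ | 1 ≤ σ ∧ unitCube n ⊆ homSimplex v σ}

/-- A function `ℝ^n → ℝ` is an affine polynomial of degree at most 1. -/
def IsAffinePoly {n : ℕ} (f : (Fin n → ℝ) → ℝ) : Prop :=
  ∃ a : Fin n → ℝ, ∃ b : ℝ, ∀ x, f x = ∑ i, a i * x i + b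

/-- `lam` is the family of basic Lagrange polynomials of the simplex with vertices `v`. -/
def IsLagrangeBasis {n : ℕ} (v : Fin (n + 1) → (Fin n → ℝ))
    (lam : Fin (n + 1) → (Fin n → ℝ) → ℝ) : Prop :=
  (∀ j, IsAffinePoly (lam j)) ∧ ∀ j k, lam j (v k) = if j = k then 1 else 0

/-- The `i`-th axial diameter of a set `S ⊆ ℝ^n`: the supremum of lengths of segments
in `S` parallel to the `i`-th coordinate axis. -/
noncomputable def axialDiam {n : ℕ} (S : Set (Fin n → ℝ)) (i : Fin n) : ℝ :=
  sSup {t : ℝ | ∃ x ∈ S, ∃ y ∈ S, (∀ k, k ≠ i → x k = y k) ∧ y i - x i = t}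

/-- The vertices of the simplex `S₂ ⊂ ℝ³`. -/
noncomputable def S2verts : Fin 4 → (Fin 3 → ℝ) :=
  ![![1/2, 0, 0], ![1/2, 1, 0], ![0, 1/2, 1], ![1, 1/2, 1]]


open AffineMap

theorem AffineBasis.frontier_convexHull {ι E : Type*} [Finite ι] [NormedAddCommGroup E]
    [NormedSpace ℝ E] (b : AffineBasis ι ℝ E) :
    frontier (convexHull ℝ (Set.range b)) =
      {x | (∀ i, 0 ≤ b.coord i x) ∧ ∃ i, b.coord i x = 0} := by
  have hclosed : IsClosed (convexHull ℝ (Set.range b)) :=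
    (Set.finite_range b).isClosed_convexHull (𝕜 := ℝ)
  ext x
  rw [frontier, hclosed.closure_eq, b.interior_convexHull, b.convexHull_eq_nonneg_coord]
  simp only [Set.mem_sdiff, Set.mem_ofPred_eq, not_forall, not_lt]
  exact and_congr_right fun hx => exists_congr fun i => (hx i).ge_iff_eq'

section HomotheticSimplex

variable {n : ℕ} {σ : ℝ}

theorem homSimplex_eq_preimage (v : Fin (n + 1) → Fin n → ℝ) (hσ : σ ≠ 0) :
    homSimplex v σ = homothety (simplexCentroid v) σ⁻¹ ⁻¹' simplexSet v := by
  ext x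
  simp only [homSimplex, homothety_apply, vsub_eq_sub, vadd_eq_add, Set.mem_image,
    Set.mem_preimage]
  constructor
  · rintro ⟨y, hy, rfl⟩
    simpa [smul_smul, hσ] using hy
  · intro hx
    exact ⟨_, hx, by simp [smul_smul, hσ]⟩

theorem frontier_homSimplex (v : Fin (n + 1) → Fin n → ℝ) (hσ : σ ≠ 0) :
    frontier (homSimplex v σ) =
      homothety (simplexCentroid v) σ⁻¹ ⁻¹' frontier (simplexSet v) := by
  rw [homSimplex_eq_preimage v hσ,
    (homothety_isOpenMap _ _ (inv_ne_zero hσ)).preimage_frontier_eq_frontier_preimage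
      (homothety_continuous _ _)]

variable (b : AffineBasis (Fin (n + 1)) ℝ (Fin n → ℝ))

theorem AffineBasis.coord_simplexCentroid (j : Fin (n + 1)) :
    b.coord j (simplexCentroid b) = ((n : ℝ) + 1)⁻¹ := by
  have hcentroid : simplexCentroid b = Finset.univ.centroid ℝ b := by
    rw [Finset.centroid, Finset.affineCombination_eq_linear_combination]
    · simp [simplexCentroid, Finset.centroidWeights, Finset.smul_sum]
    · simp only [Finset.centroidWeights, Function.const_apply, Finset.sum_const, Finset.card_univ,
        Fintype.card_fin, nsmul_eq_mul]
      field_simp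
  rw [hcentroid, b.coord_apply_centroid (Finset.mem_univ j)]
  simp

theorem AffineBasis.coord_homothety_simplexCentroid_inv (hσ : σ ≠ 0) (j : Fin (n + 1)) (x : Fin n → ℝ) :
    b.coord j (homothety (simplexCentroid b) σ⁻¹ x) =
      σ⁻¹ * (b.coord j x - (1 - σ) / ((n : ℝ) + 1)) := by
  rw [homothety_eq_lineMap, apply_lineMap, b.coord_simplexCentroid, lineMap_apply_ring']
  field_simp
  ring

theorem AffineBasis.mem_homSimplex_iff (hσ : 0 < σ) {x : Fin n → ℝ} :
    x ∈ homSimplex b σ ↔ ∀ j, (1 - σ) / ((n : ℝ) + 1) ≤ b.coord j x := by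
  simp only [homSimplex_eq_preimage b hσ.ne', Set.mem_preimage, simplexSet,
    b.convexHull_eq_nonneg_coord, Set.mem_ofPred_eq, b.coord_homothety_simplexCentroid_inv hσ.ne',
    mul_nonneg_iff_of_pos_left (inv_pos.mpr hσ), sub_nonneg]

theorem AffineBasis.mem_frontier_homSimplex_iff (hσ : 0 < σ) {x : Fin n → ℝ} :
    x ∈ frontier (homSimplex b σ) ↔
      (∀ j, (1 - σ) / ((n : ℝ) + 1) ≤ b.coord j x) ∧
        ∃ j, b.coord j x = (1 - σ) / ((n : ℝ) + 1) := by
  simp only [frontier_homSimplex b hσ.ne', Set.mem_preimage, simplexSet, b.frontier_convexHull,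
    Set.mem_ofPred_eq, b.coord_homothety_simplexCentroid_inv hσ.ne',
    mul_nonneg_iff_of_pos_left (inv_pos.mpr hσ), sub_nonneg, mul_eq_zero, inv_eq_zero, hσ.ne',
    false_or, sub_eq_zero]

end HomotheticSimplex

section LagrangeBasis

variable {n : ℕ}

theorem IsAffinePoly.apply_sum_smul {ι : Type*} [Fintype ι] {f : (Fin n → ℝ) → ℝ}
    (hf : IsAffinePoly f) (p : ι → Fin n → ℝ) {w : ι → ℝ} (hw : ∑ i, w i = 1) :
    f (∑ i, w i • p i) = ∑ i, w i * f (p i) := by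
  obtain ⟨a, c, hf⟩ := hf
  simp only [hf, Finset.sum_apply, Pi.smul_apply, smul_eq_mul, Finset.mul_sum, mul_add,
    Finset.sum_add_distrib, ← Finset.sum_mul, hw, one_mul]
  rw [Finset.sum_comm]
  congr 1
  exact Finset.sum_congr rfl fun k _ => Finset.sum_congr rfl fun i _ => by ring

variable {v : Fin (n + 1) → Fin n → ℝ} {lam : Fin (n + 1) → (Fin n → ℝ) → ℝ}

theorem IsLagrangeBasis.apply_sum_smul (hl : IsLagrangeBasis v lam) (j : Fin (n + 1))
    {w : Fin (n + 1) → ℝ} (hw : ∑ i, w i = 1) : lam j (∑ i, w i • v i) = w j := by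
  simp [(hl.1 j).apply_sum_smul v hw, hl.2]

theorem IsLagrangeBasis.affineIndependent (hl : IsLagrangeBasis v lam) :
    AffineIndependent ℝ v := by
  rw [affineIndependent_iff_eq_of_fintype_affineCombination_eq]
  intro w₁ w₂ hw₁ hw₂ heq
  rw [Finset.affineCombination_eq_linear_combination _ _ _ hw₁,
    Finset.affineCombination_eq_linear_combination _ _ _ hw₂] at heq
  funext j
  rw [← hl.apply_sum_smul j hw₁, ← hl.apply_sum_smul j hw₂, heq]

theorem IsLagrangeBasis.affineSpan_eq_top (hl : IsLagrangeBasis v lam) :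
    affineSpan ℝ (Set.range v) = ⊤ := by
  rw [hl.affineIndependent.affineSpan_eq_top_iff_card_eq_finrank_add_one]
  simp

noncomputable def IsLagrangeBasis.affineBasis (hl : IsLagrangeBasis v lam) :
    AffineBasis (Fin (n + 1)) ℝ (Fin n → ℝ) :=
  ⟨v, hl.affineIndependent, hl.affineSpan_eq_top⟩

theorem IsLagrangeBasis.coe_affineBasis (hl : IsLagrangeBasis v lam) : ⇑hl.affineBasis = v :=
  rfl

theorem IsLagrangeBasis.coord_affineBasis (hl : IsLagrangeBasis v lam) (j : Fin (n + 1))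
    (x : Fin n → ℝ) :
    hl.affineBasis.coord j x = lam j x := by
  conv_rhs => rw [← hl.affineBasis.linear_combination_coord_eq_self x]
  exact (hl.apply_sum_smul j (hl.affineBasis.sum_coord_apply_eq_one x)).symm

theorem IsLagrangeBasis.mem_homSimplex_iff (hl : IsLagrangeBasis v lam) {σ : ℝ} (hσ : 0 < σ)
    {x : Fin n → ℝ} : x ∈ homSimplex v σ ↔ ∀ j, (1 - σ) / ((n : ℝ) + 1) ≤ lam j x := by
  simpa only [hl.coord_affineBasis, hl.coe_affineBasis] using hl.affineBasis.mem_homSimplex_iff hσ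

theorem IsLagrangeBasis.mem_frontier_homSimplex_iff (hl : IsLagrangeBasis v lam) {σ : ℝ}
    (hσ : 0 < σ) {x : Fin n → ℝ} :
    x ∈ frontier (homSimplex v σ) ↔
      (∀ j, (1 - σ) / ((n : ℝ) + 1) ≤ lam j x) ∧ ∃ j, lam j x = (1 - σ) / ((n : ℝ) + 1) := by
  simpa only [hl.coord_affineBasis, hl.coe_affineBasis] using
    hl.affineBasis.mem_frontier_homSimplex_iff hσ

end LagrangeBasis

noncomputable def S2lagrange : Fin 4 → (Fin 3 → ℝ) → ℝ :=
  ![fun x => 1 - x 1 - x 2 / 2, fun x => x 1 - x 2 / 2,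
    fun x => 1 / 2 - x 0 + x 2 / 2, fun x => x 0 - 1 / 2 + x 2 / 2]

theorem isLagrangeBasis_S2lagrange : IsLagrangeBasis S2verts S2lagrange := by
  refine ⟨fun j => ?_, fun j k => ?_⟩
  · match j with
    | 0 => exact ⟨![0, -1, -1 / 2], 1, fun x => by
      simp only [S2lagrange, Fin.sum_univ_three, Matrix.cons_val]; ring⟩
    | 1 => exact ⟨![0, 1, -1 / 2], 0, fun x => by
      simp only [S2lagrange, Fin.sum_univ_three, Matrix.cons_val]; ring⟩
    | 2 => exact ⟨![-1, 0, 1 / 2], 1 / 2, fun x => by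
      simp only [S2lagrange, Fin.sum_univ_three, Matrix.cons_val]; ring⟩
    | 3 => exact ⟨![1, 0, 1 / 2], -1 / 2, fun x => by
      simp only [S2lagrange, Fin.sum_univ_three, Matrix.cons_val]; ring⟩
  · fin_cases j <;> fin_cases k <;> norm_num [S2lagrange, S2verts, Matrix.cons_val_two]

theorem neg_half_le_S2lagrange {x : Fin 3 → ℝ} (hx : x ∈ unitCube 3) (j : Fin 4) :
    -(1 / 2) ≤ S2lagrange j x := by
  obtain ⟨h0, h0'⟩ := hx 0
  obtain ⟨h1, h1'⟩ := hx 1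
  obtain ⟨h2, h2'⟩ := hx 2
  match j with
  | 0 | 1 | 2 | 3 => simp only [S2lagrange, Matrix.cons_val]; linarith

theorem exists_S2lagrange_eq_neg_half {w : Fin 3 → ℝ} (hw : w ∈ cubeVerts 3) :
    ∃ j, S2lagrange j w = -(1 / 2) := by
  rcases hw 2 with h2 | h2
  · rcases hw 0 with h0 | h0
    · exact ⟨3, by simp [S2lagrange, h0, h2]⟩
    · exact ⟨2, by simp [S2lagrange, h0, h2]; norm_num⟩
  · rcases hw 1 with h1 | h1
    · exact ⟨1, by simp [S2lagrange, h1, h2]⟩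
    · exact ⟨0, by simp [S2lagrange, h1, h2]⟩

theorem isLeast_unitCube_subset_homSimplex_S2verts :
    IsLeast {σ : ℝ | 1 ≤ σ ∧ unitCube 3 ⊆ homSimplex S2verts σ} 3 := by
  refine ⟨⟨by norm_num, fun x hx => ?_⟩, fun σ ⟨hσ, hcover⟩ => ?_⟩
  · have hthree : (1 - 3 : ℝ) / ((3 : ℕ) + 1) = -(1 / 2) := by norm_num
    rw [isLagrangeBasis_S2lagrange.mem_homSimplex_iff three_pos, hthree]
    exact neg_half_le_S2lagrange hx
  · have hone : (fun _ => 1 : Fin 3 → ℝ) ∈ unitCube 3 := fun _ => ⟨zero_le_one, le_rfl⟩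
    have h0 := (isLagrangeBasis_S2lagrange.mem_homSimplex_iff (by linarith)).mp (hcover hone) 0
    norm_num [S2lagrange] at h0
    linarith

/-- `ξ(S₂) = 3` and every vertex of `Q₃` lies on the boundary of `3S₂`,
i.e. `S₂` is a perfect simplex. -/
theorem S2_perfect :
    xiVal S2verts = 3 ∧
    ∀ w ∈ cubeVerts 3, w ∈ frontier (homSimplex S2verts 3) := by
  refine ⟨isLeast_unitCube_subset_homSimplex_S2verts.csInf_eq, fun w hw => ?_⟩
  have hcube : w ∈ unitCube 3 := fun i => by rcases hw i with h | h <;> simp [h]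
  have hthree : (1 - 3 : ℝ) / ((3 : ℕ) + 1) = -(1 / 2) := by norm_num
  rw [isLagrangeBasis_S2lagrange.mem_frontier_homSimplex_iff three_pos, hthree]
  exact ⟨neg_half_le_S2lagrange hcube, exists_S2lagrange_eq_neg_half hw⟩
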